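/- arXiv:2205.09044 — 4 statements merged into one kernel-verified Lean document; each statement's English description precedes it below -/
import Mathlib

section
/- Let (M_n) be a sequence of nonzero d×d matrices with nonnegative real entries. The following are equivalent: (a) there exist a fixed column vector c ∈ ℝ^d and row vectors r_n such that M_n/‖M_n‖ − c·r_n tends to 0 as n → ∞; (b) there exists a vector L ∈ ℝ^d such that for every column vector v with all entries positive, M_n v/‖M_n v‖ tends to L as n → ∞ (in particular the limit is independent of v). Moreover, in this situation L is collinear to the vector c of (a). -/
/-! With `A n = M n / ‖M n‖`, a nonnegative matrix of entry sum one, the normalized image of a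
positive `v` is `A n v / (1ᵀ A n v)`, and the denominator stays between `min v` and `max v`.
If `A n - c rₙ → 0`, then `A n v - (rₙ ⬝ v) c → 0`; after dividing by the denominator, summing
the entries shows that the coefficient of `c` tends to `(Σ c)⁻¹`, which in particular forces
`Σ c ≠ 0`. Conversely, if `sₙ = 1ᵀ A n` are the column sums, then
`(A n - L sₙ) v = (1ᵀ A n v) • (A n v / (1ᵀ A n v) - L) → 0` for every positive `v`; positive
vectors span, so `A n - L sₙ → 0`. -/

open Filter Matrix

/-- `‖X‖`: sum of the absolute values of the entries of a real matrix. -/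
noncomputable def matEntrySumNorm {d : ℕ} (M : Matrix (Fin d) (Fin d) ℝ) : ℝ :=
  ∑ i, ∑ j, |M i j|

/-- `‖v‖`: sum of the absolute values of the entries of a real vector. -/
noncomputable def vecEntrySumNorm {d : ℕ} (v : Fin d → ℝ) : ℝ :=
  ∑ i, |v i|

open Topology

section

variable {α ι κ : Type*} {l : Filter α}

theorem exists_pos_forall_le_of_pos [Finite ι] {v : ι → ℝ} (hv : ∀ i, 0 < v i) :
    ∃ m > 0, ∀ i, m ≤ v i := by
  cases isEmpty_or_nonempty ι
  · exact ⟨1, one_pos, isEmptyElim⟩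
  · obtain ⟨i₀, hi₀⟩ := Finite.exists_min v
    exact ⟨v i₀, hv i₀, hi₀⟩

theorem tendsto_inv_sum_smul_of_tendsto_sub_smul [Fintype ι] {x : α → ι → ℝ} {t : α → ℝ}
    {c : ι → ℝ} {m : ℝ} (hm : 0 < m) (hx : ∀ n, m ≤ ∑ i, x n i)
    (h : Tendsto (fun n => x n - t n • c) l (𝓝 0)) :
    Tendsto (fun n => (∑ i, x n i)⁻¹ • x n) l (𝓝 ((∑ i, c i)⁻¹ • c)) := by
  rcases l.eq_or_neBot with rfl | _
  · exact tendsto_bot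
  set σ := fun n => ∑ i, x n i
  set S := ∑ i, c i
  have hσ : ∀ n, σ n ≠ 0 := fun n => (hm.trans_le (hx n)).ne'
  have herr : Tendsto (fun n => (σ n)⁻¹ • (x n - t n • c)) l (𝓝 0) := by
    refine IsBoundedUnder.smul_tendsto_zero (isBoundedUnder_of ⟨m⁻¹, fun n => ?_⟩) h
    rw [Function.comp_apply, norm_inv, Real.norm_of_nonneg (hm.le.trans (hx n))]
    exact inv_anti₀ hm (hx n)
  set u := fun n => (σ n)⁻¹ * t n
  have hsum_err : ∀ n, ∑ i, ((σ n)⁻¹ • (x n - t n • c)) i = 1 - u n * S := fun n => by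
    simp only [Pi.smul_apply, Pi.sub_apply, smul_eq_mul, ← Finset.mul_sum,
      Finset.sum_sub_distrib, u, S]
    rw [show ∑ i, x n i = σ n from rfl, mul_sub, inv_mul_cancel₀ (hσ n), mul_assoc]
  have huS : Tendsto (fun n => u n * S) l (𝓝 1) := by
    have := ((continuous_finsetSum Finset.univ fun i _ => continuous_apply i).tendsto 0).comp herr
    simp only [Function.comp_def, hsum_err, Pi.zero_apply, Finset.sum_const_zero] at this
    simpa using (tendsto_const_nhds (x := (1 : ℝ))).sub this
  have hS : S ≠ 0 := by
    rintro hS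
    simp only [hS, mul_zero] at huS
    exact zero_ne_one (tendsto_nhds_unique tendsto_const_nhds huS)
  have hu : Tendsto u l (𝓝 S⁻¹) := by
    simpa [mul_inv_cancel_right₀ hS] using huS.mul_const S⁻¹
  have hdecomp : ∀ n, (σ n)⁻¹ • x n = (σ n)⁻¹ • (x n - t n • c) + u n • c := fun n => by
    simp only [smul_sub, smul_smul, u, sub_add_cancel]
  simpa only [← hdecomp, zero_add] using herr.add (hu.smul_const c)

theorem Matrix.tendsto_zero_of_forall_pos_mulVec [Fintype ι] [DecidableEq ι]
    {B : α → Matrix κ ι ℝ}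
    (h : ∀ v : ι → ℝ, (∀ j, 0 < v j) → Tendsto (fun n => B n *ᵥ v) l (𝓝 0)) :
    Tendsto B l (𝓝 0) := by
  have hcol : ∀ j, Tendsto (fun n => B n *ᵥ Pi.single j 1) l (𝓝 0) := fun j => by
    have hsingle : (0 : ι → ℝ) ≤ Pi.single j 1 := Pi.single_nonneg.2 zero_le_one
    have hpos : ∀ k, 0 < (1 + Pi.single j 1 : ι → ℝ) k := fun k =>
      add_pos_of_pos_of_nonneg one_pos (hsingle k)
    simpa [mulVec_add] using (h _ hpos).sub (h 1 fun _ => one_pos)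
  refine tendsto_pi_nhds.2 fun i => tendsto_pi_nhds.2 fun j => ?_
  simpa using tendsto_pi_nhds.1 (hcol j) i

section EntrySumOne

variable [Fintype ι] [Fintype κ] {A : Matrix κ ι ℝ} {v : ι → ℝ}

theorem Matrix.sum_mulVec_eq_sum_sum (A : Matrix κ ι ℝ) (v : ι → ℝ) :
    ∑ i, (A *ᵥ v) i = ∑ i, ∑ j, A i j * v j := by
  simp only [mulVec, dotProduct]

theorem Matrix.le_sum_mulVec (hA0 : ∀ i j, 0 ≤ A i j) (hA1 : ∑ i, ∑ j, A i j = 1) {a : ℝ}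
    (hv : ∀ j, a ≤ v j) : a ≤ ∑ i, (A *ᵥ v) i := calc
  a = ∑ i, ∑ j, A i j * a := by simp only [← Finset.sum_mul, hA1, one_mul]
  _ ≤ ∑ i, (A *ᵥ v) i := by
    rw [sum_mulVec_eq_sum_sum]
    gcongr with i _ j _
    exacts [hA0 i j, hv j]

theorem Matrix.sum_mulVec_le (hA0 : ∀ i j, 0 ≤ A i j) (hA1 : ∑ i, ∑ j, A i j = 1) {b : ℝ}
    (hv : ∀ j, v j ≤ b) : ∑ i, (A *ᵥ v) i ≤ b := calc
  ∑ i, (A *ᵥ v) i ≤ ∑ i, ∑ j, A i j * b := by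
    rw [sum_mulVec_eq_sum_sum]
    gcongr with i _ j _
    exacts [hA0 i j, hv j]
  _ = b := by simp only [← Finset.sum_mul, hA1, one_mul]

end EntrySumOne

section NormalizedImage

variable [Fintype ι] [Fintype κ] {A : α → Matrix κ ι ℝ}

theorem tendsto_normalized_mulVec_of_tendsto_sub_vecMulVec (hA0 : ∀ n i j, 0 ≤ A n i j)
    (hA1 : ∀ n, ∑ i, ∑ j, A n i j = 1) {c : κ → ℝ} {r : α → ι → ℝ}
    (h : Tendsto (fun n => A n - vecMulVec c (r n)) l (𝓝 0)) {v : ι → ℝ} (hv : ∀ j, 0 < v j) :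
    Tendsto (fun n => (∑ i, (A n *ᵥ v) i)⁻¹ • (A n *ᵥ v)) l (𝓝 ((∑ i, c i)⁻¹ • c)) := by
  obtain ⟨m, hm, hmv⟩ := exists_pos_forall_le_of_pos hv
  refine tendsto_inv_sum_smul_of_tendsto_sub_smul (t := fun n => r n ⬝ᵥ v) hm
    (fun n => le_sum_mulVec (hA0 n) (hA1 n) hmv) ?_
  have hmulVec : Tendsto (fun B : Matrix κ ι ℝ => B *ᵥ v) (𝓝 0) (𝓝 0) := by
    simpa using (continuous_id.matrix_mulVec continuous_const).tendsto (0 : Matrix κ ι ℝ)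
  simpa [Function.comp_def, sub_mulVec, vecMulVec_mulVec] using hmulVec.comp h

theorem tendsto_sub_vecMulVec_vecMul_of_tendsto_normalized [DecidableEq ι]
    (hA0 : ∀ n i j, 0 ≤ A n i j) (hA1 : ∀ n, ∑ i, ∑ j, A n i j = 1) {L : κ → ℝ}
    (hL : ∀ v : ι → ℝ, (∀ j, 0 < v j) →
      Tendsto (fun n => (∑ i, (A n *ᵥ v) i)⁻¹ • (A n *ᵥ v)) l (𝓝 L)) :
    Tendsto (fun n => A n - vecMulVec L (1 ᵥ* A n)) l (𝓝 0) := by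
  refine tendsto_zero_of_forall_pos_mulVec fun v hv => ?_
  obtain ⟨m, hm, hmv⟩ := exists_pos_forall_le_of_pos hv
  set σ := fun n => ∑ i, (A n *ᵥ v) i
  have hσ : ∀ n, 0 < σ n := fun n => hm.trans_le (le_sum_mulVec (hA0 n) (hA1 n) hmv)
  have hσ_le : ∀ n, σ n ≤ ‖v‖ := fun n =>
    sum_mulVec_le (hA0 n) (hA1 n) fun j => (Real.le_norm_self _).trans (norm_le_pi_norm v j)
  have hdecomp : ∀ n, (A n - vecMulVec L (1 ᵥ* A n)) *ᵥ v = σ n • ((σ n)⁻¹ • (A n *ᵥ v) - L) :=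
    fun n => by
      rw [sub_mulVec, vecMulVec_mulVec, ← dotProduct_mulVec, one_dotProduct, smul_sub,
        smul_inv_smul₀ (hσ n).ne', op_smul_eq_smul]
  simp only [hdecomp]
  refine IsBoundedUnder.smul_tendsto_zero (isBoundedUnder_of ⟨‖v‖, fun n => ?_⟩)
    (tendsto_sub_nhds_zero_iff.2 (hL v hv))
  rw [Function.comp_apply, Real.norm_of_nonneg (hσ n).le]
  exact hσ_le n

end NormalizedImage

end

section EntrySumNorm

variable {d : ℕ} {M : Matrix (Fin d) (Fin d) ℝ}

theorem matEntrySumNorm_pos (hM : M ≠ 0) : 0 < matEntrySumNorm M := by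
  obtain ⟨i, j, hij⟩ : ∃ i j, M i j ≠ 0 := by simpa [← Matrix.ext_iff] using hM
  exact Finset.sum_pos' (fun i _ => by positivity)
    ⟨i, Finset.mem_univ _, Finset.sum_pos' (fun _ _ => abs_nonneg _)
      ⟨j, Finset.mem_univ _, abs_pos.2 hij⟩⟩

theorem sum_sum_inv_matEntrySumNorm_smul (hM : M ≠ 0) (hMpos : ∀ i j, 0 ≤ M i j) :
    ∑ i, ∑ j, ((matEntrySumNorm M)⁻¹ • M) i j = 1 := by
  have hsum : ∑ i, ∑ j, M i j = matEntrySumNorm M :=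
    Finset.sum_congr rfl fun i _ =>
      Finset.sum_congr rfl fun j _ => (abs_of_nonneg (hMpos i j)).symm
  simp only [Matrix.smul_apply, smul_eq_mul, ← Finset.mul_sum, hsum]
  exact inv_mul_cancel₀ (matEntrySumNorm_pos hM).ne'

theorem vecEntrySumNorm_of_nonneg {x : Fin d → ℝ} (hx : ∀ i, 0 ≤ x i) :
    vecEntrySumNorm x = ∑ i, x i :=
  Finset.sum_congr rfl fun i _ => abs_of_nonneg (hx i)

theorem inv_vecEntrySumNorm_mulVec_eq_smul (hMpos : ∀ i j, 0 ≤ M i j) {v : Fin d → ℝ}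
    (hv : ∀ j, 0 ≤ v j) {k : ℝ} (hk : k ≠ 0) :
    (vecEntrySumNorm (M *ᵥ v))⁻¹ • (M *ᵥ v) = (∑ i, ((k • M) *ᵥ v) i)⁻¹ • ((k • M) *ᵥ v) := by
  have hMv : ∀ i, 0 ≤ (M *ᵥ v) i := fun i => dotProduct_nonneg_of_nonneg (hMpos i) hv
  rw [vecEntrySumNorm_of_nonneg hMv, smul_mulVec, smul_smul]
  simp only [Pi.smul_apply, smul_eq_mul, ← Finset.mul_sum]
  rw [mul_inv, mul_comm k⁻¹, mul_assoc, inv_mul_cancel₀ hk, mul_one]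

end EntrySumNorm

/-- for a sequence of nonzero nonnegative `d × d` real matrices,
`M n / ‖M n‖ - c ⬝ r_n → 0` for a *fixed* column vector `c` iff the normalized images
`M n v / ‖M n v‖` of every positive vector `v` converge to a limit `L` independent of `v`;
moreover `L` is collinear to `c`. -/
theorem rank_one_approx_const_col_iff_normalized_image_converges {d : ℕ}
    (M : ℕ → Matrix (Fin d) (Fin d) ℝ)
    (hM : ∀ n, M n ≠ 0) (hMpos : ∀ n i j, 0 ≤ M n i j) :
    ((∃ c : Fin d → ℝ, ∃ r : ℕ → Fin d → ℝ,
        Tendsto (fun n => (matEntrySumNorm (M n))⁻¹ • M n - vecMulVec c (r n))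
          atTop (nhds 0))
      ↔ (∃ L : Fin d → ℝ, ∀ v : Fin d → ℝ, (∀ i, 0 < v i) →
          Tendsto (fun n => (vecEntrySumNorm (M n *ᵥ v))⁻¹ • (M n *ᵥ v))
            atTop (nhds L)))
    ∧ ∀ c : Fin d → ℝ, ∀ r : ℕ → Fin d → ℝ, ∀ L : Fin d → ℝ,
        Tendsto (fun n => (matEntrySumNorm (M n))⁻¹ • M n - vecMulVec c (r n))
          atTop (nhds 0) →
        (∀ v : Fin d → ℝ, (∀ i, 0 < v i) →
          Tendsto (fun n => (vecEntrySumNorm (M n *ᵥ v))⁻¹ • (M n *ᵥ v))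
            atTop (nhds L)) →
        ∃ t : ℝ, L = t • c := by
  set A : ℕ → Matrix (Fin d) (Fin d) ℝ := fun n => (matEntrySumNorm (M n))⁻¹ • M n
  have hA0 : ∀ n i j, 0 ≤ A n i j := fun n i j =>
    mul_nonneg (inv_nonneg.2 (matEntrySumNorm_pos (hM n)).le) (hMpos n i j)
  have hA1 : ∀ n, ∑ i, ∑ j, A n i j = 1 := fun n =>
    sum_sum_inv_matEntrySumNorm_smul (hM n) (hMpos n)
  have himage : ∀ v : Fin d → ℝ, (∀ j, 0 < v j) →
      (fun n => (vecEntrySumNorm (M n *ᵥ v))⁻¹ • (M n *ᵥ v))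
        = fun n => (∑ i, (A n *ᵥ v) i)⁻¹ • (A n *ᵥ v) := fun v hv => funext fun n =>
    inv_vecEntrySumNorm_mulVec_eq_smul (hMpos n) (fun j => (hv j).le)
      (inv_ne_zero (matEntrySumNorm_pos (hM n)).ne')
  have hforward : ∀ (c : Fin d → ℝ) (r : ℕ → Fin d → ℝ),
      Tendsto (fun n => A n - vecMulVec c (r n)) atTop (𝓝 0) → ∀ v : Fin d → ℝ, (∀ j, 0 < v j) →
        Tendsto (fun n => (vecEntrySumNorm (M n *ᵥ v))⁻¹ • (M n *ᵥ v)) atTop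
          (𝓝 ((∑ i, c i)⁻¹ • c)) := fun c r h v hv => by
    rw [himage v hv]
    exact tendsto_normalized_mulVec_of_tendsto_sub_vecMulVec hA0 hA1 h hv
  refine ⟨⟨fun ⟨c, r, h⟩ => ⟨_, hforward c r h⟩, fun ⟨L, hL⟩ => ⟨L, fun n => 1 ᵥ* A n, ?_⟩⟩,
    fun c r L hc hL => ⟨_, tendsto_nhds_unique (hL 1 fun _ => one_pos)
      (hforward c r hc 1 fun _ => one_pos)⟩⟩
  refine tendsto_sub_vecMulVec_vecMul_of_tendsto_normalized hA0 hA1 fun v hv => ?_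
  rw [← himage v hv]
  exact hL v hv
end

section
/- Let p_0, p_1, p_2, p_3 be positive reals with p_3 > p_1, let M_1 := [[p_1, p_0],[0, p_3]] and M_2 := [[p_2, p_1],[0, 0]], and let c ∈ ℝ² be a column vector with both entries positive. Then: (a) the sequence n ↦ M_1^n c/‖M_1^n c‖ converges to the vector (p_0/(p_0+p_3−p_1), (p_3−p_1)/(p_0+p_3−p_1)), whose second entry is nonzero; (b) for every m ≥ 0 and every n ≥ m+1, M_1^m M_2^{n−m} c/‖M_1^m M_2^{n−m} c‖ = (1, 0). Consequently, for ω ∈ {1,2}^ℕ the pointwise limit of ω ↦ M_{ω_1}⋯M_{ω_n} c/‖M_{ω_1}⋯M_{ω_n} c‖ is discontinuous and the convergence is not uniform on {1,2}^ℕ. -/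
open Filter Matrix

lemma vecNorm_two (v : Fin 2 → ℝ) : vecEntrySumNorm v = |v 0| + |v 1| := by
  simp [vecEntrySumNorm, Fin.sum_univ_two]

lemma abs_snd_le_vecNorm (w : Fin 2 → ℝ) : |w 1| ≤ vecEntrySumNorm w := by
  rw [vecNorm_two]; linarith [abs_nonneg (w 0)]

lemma norm_scale (s x y : ℝ) (hs : 0 < s) (hx : 0 < x) (hy : 0 < y) :
    (vecEntrySumNorm ![s*x, s*y])⁻¹ • ![s*x, s*y] = ![x/(x+y), y/(x+y)] := by
  have hxy : 0 < x + y := by linarith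
  funext i
  fin_cases i <;>
    simp [vecNorm_two, abs_of_pos (mul_pos hs hx), abs_of_pos (mul_pos hs hy)] <;>
  · field_simp

lemma norm_pos_vec {x : ℝ} (hx : 0 < x) :
    (vecEntrySumNorm ![x, 0])⁻¹ • ![x, (0:ℝ)] = ![1, 0] := by
  funext i
  fin_cases i <;> simp [vecNorm_two, abs_of_pos hx, hx.ne']

/-- Counterexample 2.2: with `M₁ = [[p₁,p₀],[0,p₃]]`, `M₂ = [[p₂,p₁],[0,0]]`,
`p₃ > p₁` and `c > 0`: (a) `M₁^n c/‖M₁^n c‖` converges to a vector with nonzero second entry;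
(b) `M₁^m M₂^{n−m} c/‖⋯‖ = (1,0)` for `n ≥ m+1`; consequently the pointwise limit of the
normalized products over `{1,2}^ℕ` is discontinuous and the convergence is not uniform. -/
theorem nonuniform_convergence_counterexample
    (p0 p1 p2 p3 : ℝ) (h0 : 0 < p0) (h1 : 0 < p1) (h2 : 0 < p2) (h3 : 0 < p3)
    (h31 : p1 < p3)
    (M1 M2 : Matrix (Fin 2) (Fin 2) ℝ)
    (hM1 : M1 = !![p1, p0; 0, p3]) (hM2 : M2 = !![p2, p1; 0, 0])
    (c : Fin 2 → ℝ) (hc : ∀ i, 0 < c i) :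
    Tendsto (fun n => (vecEntrySumNorm (M1 ^ n *ᵥ c))⁻¹ • (M1 ^ n *ᵥ c)) atTop
      (nhds ![p0 / (p0 + p3 - p1), (p3 - p1) / (p0 + p3 - p1)]) ∧
    (p3 - p1) / (p0 + p3 - p1) ≠ 0 ∧
    (∀ m n : ℕ, m + 1 ≤ n →
      (vecEntrySumNorm ((M1 ^ m * M2 ^ (n - m)) *ᵥ c))⁻¹ • ((M1 ^ m * M2 ^ (n - m)) *ᵥ c)
        = ![(1 : ℝ), 0]) ∧
    -- the convergence of `ω ↦ M_{ω_1}⋯M_{ω_n} c/‖⋯‖` is not uniform on `{1,2}^ℕ`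
    -- (here `ω i = 0` codes the matrix `M₁` and `ω i = 1` codes `M₂`)
    (¬ ∃ L : (ℕ → Fin 2) → (Fin 2 → ℝ),
      ∀ ε > (0 : ℝ), ∃ N₀ : ℕ, ∀ n ≥ N₀, ∀ ω : ℕ → Fin 2,
        vecEntrySumNorm
          ((vecEntrySumNorm ((((List.range n).map fun t => ![M1, M2] (ω t)).prod) *ᵥ c))⁻¹ •
            ((((List.range n).map fun t => ![M1, M2] (ω t)).prod) *ᵥ c) - L ω) < ε) ∧
    -- any pointwise limit function is discontinuous
    (∀ L : (ℕ → Fin 2) → (Fin 2 → ℝ),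
      (∀ ω : ℕ → Fin 2,
        Tendsto (fun n =>
          (vecEntrySumNorm ((((List.range n).map fun t => ![M1, M2] (ω t)).prod) *ᵥ c))⁻¹ •
            ((((List.range n).map fun t => ![M1, M2] (ω t)).prod) *ᵥ c))
          atTop (nhds (L ω))) →
      ¬ Continuous L) := by
  
  have hM1v : ∀ v : Fin 2 → ℝ, M1 *ᵥ v = ![p1 * v 0 + p0 * v 1, p3 * v 1] := by
    intro v; subst hM1; funext i
    fin_cases i <;> simp [Matrix.mulVec, dotProduct, Fin.sum_univ_two]
  have hM2v : ∀ v : Fin 2 → ℝ, M2 *ᵥ v = ![p2 * v 0 + p1 * v 1, 0] := by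
    intro v; subst hM2; funext i
    fin_cases i <;> simp [Matrix.mulVec, dotProduct, Fin.sum_univ_two]
  have h31' : 0 < p3 - p1 := by linarith
  obtain ⟨l, hl3, hl, hlval⟩ : ∃ l : ℝ, (p3 - p1) * l = p0 * c 1 ∧ 0 < l ∧ l = p0 * c 1 / (p3 - p1) :=
    ⟨p0 * c 1 / (p3 - p1), by field_simp, div_pos (mul_pos h0 (hc 1)) h31', rfl⟩
  have hkey : ∀ n : ℕ, M1 ^ n *ᵥ c = ![p3 ^ n * l + p1 ^ n * (c 0 - l), p3 ^ n * c 1] := by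
    intro n
    induction n with
    | zero => funext i; fin_cases i <;> simp
    | succ n ih =>
      rw [pow_succ', ← Matrix.mulVec_mulVec, ih, hM1v]
      funext i; fin_cases i
      · show p1 * (p3 ^ n * l + p1 ^ n * (c 0 - l)) + p0 * (p3 ^ n * c 1)
            = p3 ^ (n + 1) * l + p1 ^ (n + 1) * (c 0 - l)
        linear_combination (-(p3 ^ n)) * hl3
      · show p3 * (p3 ^ n * c 1) = p3 ^ (n + 1) * c 1
        ring
  obtain ⟨q, hq0, hq1, hpow⟩ :
      ∃ q : ℝ, 0 < q ∧ q < 1 ∧ ∀ n : ℕ, p3 ^ n * q ^ n = p1 ^ n :=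
    ⟨p1 / p3, div_pos h1 h3, (div_lt_one h3).2 h31,
      fun n => by rw [div_pow]; field_simp⟩
  obtain ⟨u, hu_def⟩ : ∃ u : ℕ → ℝ, ∀ n, u n = l + q ^ n * (c 0 - l) :=
    ⟨_, fun n => rfl⟩
  have huform : ∀ n : ℕ, M1 ^ n *ᵥ c = ![p3 ^ n * u n, p3 ^ n * c 1] := by
    intro n
    rw [hkey n]
    funext i; fin_cases i
    · show p3 ^ n * l + p1 ^ n * (c 0 - l) = p3 ^ n * u n
      rw [hu_def n]
      linear_combination (l - c 0) * hpow n
    · rfl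
  have hun : ∀ n : ℕ, 0 < u n := by
    intro n
    have h1' : 0 < q ^ n * c 0 := mul_pos (pow_pos hq0 n) (hc 0)
    have h2' : 0 ≤ (1 - q ^ n) * l :=
      mul_nonneg (sub_nonneg.2 (pow_le_one₀ hq0.le hq1.le)) hl.le
    rw [hu_def n]
    nlinarith
  have hform : ∀ n : ℕ, (vecEntrySumNorm (M1 ^ n *ᵥ c))⁻¹ • (M1 ^ n *ᵥ c)
      = ![u n / (u n + c 1), c 1 / (u n + c 1)] := by
    intro n
    rw [huform n]
    exact norm_scale _ _ _ (pow_pos h3 n) (hun n) (hc 1)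
  -- limit of u
  have htu : Tendsto u atTop (nhds l) := by
    have h := tendsto_pow_atTop_nhds_zero_of_lt_one hq0.le hq1
    refine Tendsto.congr (fun n => (hu_def n).symm) ?_
    simpa using (h.mul_const (c 0 - l)).const_add l
  have hsum_pos : (0:ℝ) < l + c 1 := by linarith [hc 1]
  have hsum_ne : l + c 1 ≠ 0 := ne_of_gt hsum_pos
  have hden_pos : (0:ℝ) < p0 + p3 - p1 := by linarith
  have hden_ne : p0 + p3 - p1 ≠ 0 := ne_of_gt hden_pos
  have hA : Tendsto (fun n => (vecEntrySumNorm (M1 ^ n *ᵥ c))⁻¹ • (M1 ^ n *ᵥ c)) atTop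
      (nhds ![p0 / (p0 + p3 - p1), (p3 - p1) / (p0 + p3 - p1)]) := by
    have hl0 : l / (l + c 1) = p0 / (p0 + p3 - p1) := by
      rw [div_eq_div_iff hsum_ne hden_ne]
      linear_combination hl3
    have hl1 : c 1 / (l + c 1) = (p3 - p1) / (p0 + p3 - p1) := by
      rw [div_eq_div_iff hsum_ne hden_ne]
      linear_combination (-1 : ℝ) * hl3
    have hT : Tendsto (fun n => ![u n / (u n + c 1), c 1 / (u n + c 1)]) atTop
        (nhds ![p0 / (p0 + p3 - p1), (p3 - p1) / (p0 + p3 - p1)]) := by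
      rw [tendsto_pi_nhds]
      intro i
      fin_cases i
      · show Tendsto (fun n => u n / (u n + c 1)) atTop (nhds (![p0 / (p0 + p3 - p1), (p3 - p1) / (p0 + p3 - p1)] 0))
        simp only [Matrix.cons_val_zero]
        rw [← hl0]
        exact htu.div (htu.add tendsto_const_nhds) hsum_ne
      · show Tendsto (fun n => c 1 / (u n + c 1)) atTop (nhds (![p0 / (p0 + p3 - p1), (p3 - p1) / (p0 + p3 - p1)] 1))
        simp only [Matrix.cons_val_one, Matrix.head_cons]
        rw [← hl1]
        exact tendsto_const_nhds.div (htu.add tendsto_const_nhds) hsum_ne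
    exact hT.congr (fun n => (hform n).symm)
  -- part (b)
  have hM1x : ∀ (m : ℕ) (x : ℝ), M1 ^ m *ᵥ ![x, 0] = ![p1 ^ m * x, 0] := by
    intro m x
    induction m with
    | zero => funext i; fin_cases i <;> simp
    | succ m ih =>
      rw [pow_succ', ← Matrix.mulVec_mulVec, ih, hM1v]
      funext i; fin_cases i
      · show p1 * (p1 ^ m * x) + p0 * 0 = p1 ^ (m + 1) * x
        ring
      · show p3 * 0 = (0:ℝ)
        ring
  have hM2x : ∀ k : ℕ, M2 ^ (k + 1) *ᵥ c = ![p2 ^ k * (p2 * c 0 + p1 * c 1), 0] := by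
    intro k
    induction k with
    | zero =>
      rw [pow_one, hM2v]
      funext i; fin_cases i
      · show p2 * c 0 + p1 * c 1 = p2 ^ 0 * (p2 * c 0 + p1 * c 1); ring
      · rfl
    | succ k ih =>
      rw [pow_succ', ← Matrix.mulVec_mulVec, ih, hM2v]
      funext i; fin_cases i
      · show p2 * (p2 ^ k * (p2 * c 0 + p1 * c 1)) + p1 * 0 = p2 ^ (k + 1) * (p2 * c 0 + p1 * c 1)
        ring
      · show (0:ℝ) = 0; rfl
  have hB : ∀ m n : ℕ, m + 1 ≤ n →
      (vecEntrySumNorm ((M1 ^ m * M2 ^ (n - m)) *ᵥ c))⁻¹ • ((M1 ^ m * M2 ^ (n - m)) *ᵥ c)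
        = ![(1 : ℝ), 0] := by
    intro m n hmn
    obtain ⟨k, hk⟩ : ∃ k, n - m = k + 1 :=
      ⟨n - m - 1, by omega⟩
    rw [← Matrix.mulVec_mulVec, hk, hM2x k, hM1x]
    exact norm_pos_vec
      (mul_pos (pow_pos h1 m) (mul_pos (pow_pos h2 k)
        (by nlinarith [hc 0, hc 1]) |>.trans_eq rfl) |>.trans_eq rfl)
  have hv1 : (0:ℝ) < (p3 - p1) / (p0 + p3 - p1) := div_pos h31' hden_pos
  -- list product lemmas
  have hP0 : ∀ (ω : ℕ → Fin 2) (n : ℕ), (∀ t, t < n → ω t = 0) →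
      ((List.range n).map fun t => ![M1, M2] (ω t)).prod = M1 ^ n := by
    intro ω n hω
    rw [List.prod_eq_pow_card _ M1 ?_]
    · simp
    · intro x hx
      simp only [List.mem_map, List.mem_range] at hx
      obtain ⟨a, ha, rfl⟩ := hx
      rw [hω a ha]; rfl
  have hPmix : ∀ (ω : ℕ → Fin 2) (m n : ℕ), m ≤ n → (∀ t, t < m → ω t = 0) →
      (∀ t, m ≤ t → ω t = 1) →
      ((List.range n).map fun t => ![M1, M2] (ω t)).prod = M1 ^ m * M2 ^ (n - m) := by
    intro ω m n hmn h0' h1'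
    obtain ⟨k, rfl⟩ := Nat.exists_eq_add_of_le hmn
    rw [Nat.add_sub_cancel_left]
    rw [List.range_add, List.map_append, List.prod_append, List.map_map]
    rw [List.prod_eq_pow_card _ M1 ?_, List.prod_eq_pow_card _ M2 ?_]
    · simp
    · intro x hx
      simp only [List.map_map, List.mem_map, List.mem_range, Function.comp] at hx
      obtain ⟨a, ha, rfl⟩ := hx
      simp only [Function.comp_apply, h1' (m + a) (Nat.le_add_right m a)]; rfl
    · intro x hx
      simp only [List.mem_map, List.mem_range] at hx
      obtain ⟨a, ha, rfl⟩ := hx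
      rw [h0' a ha]; rfl
  -- tendsto of second component of normalized M1-power sequence
  have hl1 : c 1 / (l + c 1) = (p3 - p1) / (p0 + p3 - p1) := by
    rw [div_eq_div_iff hsum_ne hden_ne]
    linear_combination (-1 : ℝ) * hl3
  have hg1 : Tendsto (fun n => c 1 / (u n + c 1)) atTop
      (nhds ((p3 - p1) / (p0 + p3 - p1))) := by
    rw [← hl1]
    exact tendsto_const_nhds.div (htu.add tendsto_const_nhds) hsum_ne
  refine ⟨hA, ne_of_gt hv1, hB, ?_, ?_⟩
  · -- not uniform
    rintro ⟨L, hL⟩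
    obtain ⟨N₀, hN₀⟩ := hL ((p3 - p1) / (p0 + p3 - p1) / 3) (by positivity)
    obtain ⟨N₁, hN₁⟩ := Metric.tendsto_atTop.mp hg1 ((p3 - p1) / (p0 + p3 - p1) / 3)
      (by positivity)
    set v1 : ℝ := (p3 - p1) / (p0 + p3 - p1) with hv1def
    set n : ℕ := max N₀ N₁ with hn_def
    set ω : ℕ → Fin 2 := fun t => if t < n then (0:Fin 2) else 1 with hω_def
    have hω0 : ∀ t, t < n → ω t = 0 := fun t ht => if_pos ht
    have hω1 : ∀ t, n ≤ t → ω t = 1 := fun t ht => if_neg (by omega)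
    have e1 := hN₀ n (le_max_left _ _) ω
    have e2 := hN₀ (n + 1) (le_trans (le_max_left _ _) (Nat.le_succ n)) ω
    rw [hPmix ω n n le_rfl hω0 hω1, Nat.sub_self, pow_zero, mul_one, hform n] at e1
    rw [hPmix ω n (n + 1) (Nat.le_succ n) hω0 hω1, hB n (n + 1) le_rfl] at e2
    have e3 := hN₁ n (le_max_right _ _)
    rw [Real.dist_eq] at e3
    set a : ℝ := c 1 / (u n + c 1) with ha_def
    set b : ℝ := L ω 1 with hb_def
    have f1 : |a - b| < v1 / 3 := by
      refine lt_of_le_of_lt ?_ e1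
      have := abs_snd_le_vecNorm (![u n / (u n + c 1), a] - L ω)
      simpa using this
    have f2 : |(0:ℝ) - b| < v1 / 3 := by
      refine lt_of_le_of_lt ?_ e2
      have := abs_snd_le_vecNorm (![(1:ℝ), 0] - L ω)
      simpa using this
    have f3 : |a - v1| < v1 / 3 := e3
    have h4 : |a| ≤ |a - b| + |b| := by
      calc |a| = |(a - b) + b| := by ring_nf
        _ ≤ |a - b| + |b| := abs_add_le _ _
    have h5 : v1 - v1 / 3 < a := by
      have := abs_lt.mp f3; linarith
    have h6 : |(0:ℝ) - b| = |b| := by simp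
    rw [h6] at f2
    have h7 : a ≤ |a| := le_abs_self a
    linarith
  · -- discontinuity of any pointwise limit
    intro L hpt hcont
    have hLω0 : L (fun _ => 0) = ![p0 / (p0 + p3 - p1), (p3 - p1) / (p0 + p3 - p1)] := by
      refine tendsto_nhds_unique (hpt (fun _ => 0)) ?_
      refine hA.congr (fun n => ?_)
      rw [hP0 (fun _ => 0) n (fun t _ => rfl)]
    have hLωm : ∀ m : ℕ, L (fun t => if t < m then (0:Fin 2) else 1) = ![1, 0] := by
      intro m
      refine tendsto_nhds_unique (hpt _) ?_
      refine Tendsto.congr' ?_ tendsto_const_nhds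
      filter_upwards [eventually_ge_atTop (m + 1)] with n hn
      rw [hPmix _ m n (by omega) (fun t ht => if_pos ht) (fun t ht => if_neg (by omega))]
      exact (hB m n hn).symm
    have hω : Tendsto (fun m : ℕ => fun t : ℕ => if t < m then (0:Fin 2) else 1) atTop
        (nhds (fun _ : ℕ => (0:Fin 2))) := by
      rw [tendsto_pi_nhds]
      intro t
      refine Tendsto.congr' ?_ tendsto_const_nhds
      filter_upwards [eventually_ge_atTop (t + 1)] with m hm
      simp [Nat.lt_of_lt_of_le (Nat.lt_succ_self t) hm]
    have h6 : Tendsto (fun m : ℕ => L (fun t : ℕ => if t < m then (0:Fin 2) else 1)) atTop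
        (nhds (L (fun _ => 0))) := (hcont.tendsto _).comp hω
    have h7 : Tendsto (fun m : ℕ => L (fun t : ℕ => if t < m then (0:Fin 2) else 1)) atTop
        (nhds ![(1:ℝ), 0]) :=
      Tendsto.congr (fun m => (hLωm m).symm) tendsto_const_nhds
    have h8 : L (fun _ => 0) = ![(1:ℝ), 0] := tendsto_nhds_unique h6 h7
    rw [hLω0] at h8
    have h9 := congrFun h8 1
    simp only [Matrix.cons_val_one, Matrix.head_cons] at h9
    exact absurd h9 (ne_of_gt hv1)
end

section
/- Let k ≥ 2 and N ≥ 1 be integers, let c_0, …, c_N be reals with c_n := 0 for n ∉ {0,…,N}, let q := ⌈N/(k−1)⌉ − 1, and for i ∈ {0,…,k−1} let B_i be the (q+1)×(q+1) matrix whose entry in row j and column j' (0 ≤ j, j' ≤ q) is c_{i+kj−j'}. Let f : ℝ → ℝ be a function that vanishes outside the interval [0, q+1). Then f satisfies the two-scale difference equation f(x) = Σ_{n=0}^{N} c_n f(kx − n) for every x ∈ ℝ if and only if the vector-valued function ψ_f : [0,1) → ℝ^{q+1} defined by ψ_f(x) := (f(x), f(x+1), …, f(x+q)) satisfies ψ_f(x)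 = B_i ψ_f(kx − i) for every i ∈ {0,…,k−1} and every x in the semi-open interval [i/k, (i+1)/k). -/
open Matrix

lemma key_sum (N q : ℕ) (c : ℤ → ℝ)
    (hc : ∀ n : ℤ, n < 0 ∨ (N : ℤ) < n → c n = 0)
    (f : ℝ → ℝ)
    (hf : ∀ x : ℝ, x < 0 ∨ ((q : ℝ) + 1) ≤ x → f x = 0)
    (m : ℤ) (y : ℝ) (hy0 : 0 ≤ y) (hy1 : y < 1) :
    ∑ n ∈ Finset.range (N + 1), c (n : ℤ) * f (y + (m : ℝ) - (n : ℝ))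
      = ∑ j' : Fin (q + 1), c (m - (j' : ℤ)) * f (y + ((j' : ℕ) : ℝ)) := by
  set g : ℤ → ℝ := fun n => c n * f (y + (m : ℝ) - (n : ℝ)) with hg
  set T : Finset ℤ := Finset.Icc (min 0 (m - q)) (max (N : ℤ) m) with hT
  have h1 : ∑ n ∈ Finset.range (N + 1), c (n : ℤ) * f (y + (m : ℝ) - (n : ℝ))
      = ∑ n ∈ Finset.Icc (0 : ℤ) (N : ℤ), g n := by
    refine Finset.sum_bij' (fun (n : ℕ) (_ : n ∈ Finset.range (N + 1)) => (n : ℤ))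
      (fun (n : ℤ) (_ : n ∈ Finset.Icc (0 : ℤ) (N : ℤ)) => n.toNat) ?_ ?_ ?_ ?_ ?_
    · intro a ha
      have := Finset.mem_range.mp ha
      simp only [Finset.mem_Icc]
      omega
    · intro a ha
      have := Finset.mem_Icc.mp ha
      simp only [Finset.mem_range]
      omega
    · intro a _; simp
    · intro a ha
      have := Finset.mem_Icc.mp ha
      simp only [Int.toNat_of_nonneg this.1]
    · intro a _
      simp [hg]
  have h2 : ∑ j' : Fin (q + 1), c (m - (j' : ℤ)) * f (y + ((j' : ℕ) : ℝ))
      = ∑ n ∈ Finset.Icc (m - q) m, g n := by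
    refine Finset.sum_bij' (fun (a : Fin (q + 1)) (_ : a ∈ Finset.univ) => m - (a : ℤ))
      (fun (n : ℤ) (hn : n ∈ Finset.Icc (m - q) m) =>
        (⟨(m - n).toNat, by have := Finset.mem_Icc.mp hn; omega⟩ : Fin (q + 1)))
      ?_ ?_ ?_ ?_ ?_
    · intro a _
      simp only [Finset.mem_Icc]
      have := a.2
      omega
    · intro a _; exact Finset.mem_univ _
    · intro a _
      ext
      dsimp
      have := a.2
      omega
    · intro a ha
      have := Finset.mem_Icc.mp ha
      dsimp
      omega
    · intro a _
      congr 2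
      push_cast
      ring
  rw [h1, h2]
  have hs1 : Finset.Icc (0 : ℤ) (N : ℤ) ⊆ T := by
    apply Finset.Icc_subset_Icc <;> omega
  have hs2 : Finset.Icc (m - q) m ⊆ T := by
    apply Finset.Icc_subset_Icc <;> omega
  have e1 : ∑ n ∈ T, g n = ∑ n ∈ Finset.Icc (0 : ℤ) (N : ℤ), g n := by
    refine (Finset.sum_subset hs1 ?_).symm
    intro n _ hn
    rcases Finset.mem_Icc.not.mp hn with hn'
    have : n < 0 ∨ (N : ℤ) < n := by omega
    simp [hg, hc n this]
  have e2 : ∑ n ∈ T, g n = ∑ n ∈ Finset.Icc (m - q) m, g n := by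
    refine (Finset.sum_subset hs2 ?_).symm
    intro n _ hn
    rcases Finset.mem_Icc.not.mp hn with hn'
    have hcase : n < m - q ∨ m < n := by omega
    have hfz : f (y + (m : ℝ) - (n : ℝ)) = 0 := by
      rcases hcase with h | h
      · apply hf
        right
        have : (q : ℤ) + 1 ≤ m - n := by omega
        have : ((q : ℝ)) + 1 ≤ (m : ℝ) - (n : ℝ) := by exact_mod_cast this
        linarith
      · apply hf
        left
        have : m - n ≤ -1 := by omega
        have : (m : ℝ) - (n : ℝ) ≤ -1 := by exact_mod_cast this
        linarith
    simp [hg, hfz]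
  rw [← e1, e2]

/-- Proposition 4.2: a function `f` vanishing outside `[0, q+1)` satisfies
the lattice two-scale difference equation `f(x) = Σ_n c_n f(kx − n)` iff the vector
function `ψ_f(x) = (f(x), …, f(x+q))` satisfies `ψ_f(x) = B_i ψ_f(kx − i)` on each
interval `[i/k, (i+1)/k)`. -/
theorem two_scale_equation_iff_matrix_refinement
    (k N : ℕ) (hk : 2 ≤ k) (hN : 1 ≤ N)
    (c : ℤ → ℝ) (hc : ∀ n : ℤ, n < 0 ∨ (N : ℤ) < n → c n = 0)
    (q : ℕ) (hq : (q : ℤ) + 1 = ⌈(N : ℚ) / ((k : ℚ) - 1)⌉)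
    (B : Fin k → Matrix (Fin (q + 1)) (Fin (q + 1)) ℝ)
    (hB : ∀ (i : Fin k) (j j' : Fin (q + 1)),
      B i j j' = c ((i : ℤ) + (k : ℤ) * (j : ℤ) - (j' : ℤ)))
    (f : ℝ → ℝ)
    (hf : ∀ x : ℝ, x < 0 ∨ ((q : ℝ) + 1) ≤ x → f x = 0) :
    (∀ x : ℝ, f x = ∑ n ∈ Finset.range (N + 1), c (n : ℤ) * f ((k : ℝ) * x - (n : ℝ)))
    ↔ (∀ (i : Fin k) (x : ℝ), (i : ℝ) / (k : ℝ) ≤ x → x < ((i : ℝ) + 1) / (k : ℝ) →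
        (fun j : Fin (q + 1) => f (x + (j : ℕ)))
          = B i *ᵥ (fun j : Fin (q + 1) => f ((k : ℝ) * x - (i : ℝ) + (j : ℕ)))) := by
  have hkR : (0 : ℝ) < (k : ℝ) := by positivity
  constructor
  · intro htwo i x hx1 hx2
    funext j
    have hy0 : 0 ≤ (k : ℝ) * x - (i : ℝ) := by
      have := (div_le_iff₀ hkR).mp hx1
      linarith [this]
    have hy1 : (k : ℝ) * x - (i : ℝ) < 1 := by
      have := (lt_div_iff₀ hkR).mp hx2
      linarith [this]
    have hkey := key_sum N q c hc f hf ((i : ℤ) + (k : ℤ) * (j : ℤ))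
      ((k : ℝ) * x - (i : ℝ)) hy0 hy1
    have e1 : ∀ n ∈ Finset.range (N + 1),
        c (n : ℤ) * f ((k : ℝ) * (x + ((j : ℕ) : ℝ)) - (n : ℝ))
        = c (n : ℤ) * f ((k : ℝ) * x - (i : ℝ) + (((i : ℤ) + (k : ℤ) * (j : ℤ) : ℤ) : ℝ) - (n : ℝ)) := by
      intro n _
      congr 2
      push_cast
      ring
    simp only [htwo (x + ((j : ℕ) : ℝ)), Matrix.mulVec, dotProduct]
    rw [Finset.sum_congr rfl e1, hkey]
    apply Finset.sum_congr rfl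
    intro j' _
    rw [hB]
  · intro hmat x
    have hqN : (N : ℝ) ≤ ((k : ℝ) - 1) * ((q : ℝ) + 1) := by
      have hk1 : (0 : ℚ) < (k : ℚ) - 1 := by
        have : (2 : ℚ) ≤ (k : ℚ) := by exact_mod_cast hk
        linarith
      have h1 : ((N : ℚ)) / ((k : ℚ) - 1) ≤ ((q : ℚ) + 1) := by
        calc ((N : ℚ)) / ((k : ℚ) - 1) ≤ (⌈(N : ℚ) / ((k : ℚ) - 1)⌉ : ℚ) := Int.le_ceil _
        _ = ((q : ℚ) + 1) := by rw [← hq]; push_cast; ring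
      have h2 : (N : ℚ) ≤ ((k : ℚ) - 1) * ((q : ℚ) + 1) := by
        rw [div_le_iff₀ hk1] at h1
        linarith
      exact_mod_cast h2
    rcases lt_or_ge x 0 with hx | hx
    · rw [hf x (Or.inl hx)]
      symm
      apply Finset.sum_eq_zero
      intro n _
      have : (k : ℝ) * x - (n : ℝ) < 0 := by
        have h1 : (k : ℝ) * x < 0 := by
          apply mul_neg_of_pos_of_neg hkR hx
        have h2 : (0 : ℝ) ≤ (n : ℝ) := Nat.cast_nonneg n
        linarith
      rw [hf _ (Or.inl this), mul_zero]
    · rcases le_or_gt ((q : ℝ) + 1) x with hx2 | hx2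
      · rw [hf x (Or.inr hx2)]
        symm
        apply Finset.sum_eq_zero
        intro n hn
        have hnN : (n : ℝ) ≤ (N : ℝ) := by
          have := Finset.mem_range.mp hn
          exact_mod_cast Nat.lt_succ_iff.mp this
        have : ((q : ℝ) + 1) ≤ (k : ℝ) * x - (n : ℝ) := by
          have h1 : (k : ℝ) * ((q : ℝ) + 1) ≤ (k : ℝ) * x :=
            mul_le_mul_of_nonneg_left hx2 (le_of_lt hkR)
          nlinarith
        rw [hf _ (Or.inr this), mul_zero]
      · -- main case : 0 ≤ x < q + 1
        set jz : ℤ := ⌊x⌋ with hjz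
        have hj0 : 0 ≤ jz := Int.le_floor.mpr (by exact_mod_cast hx)
        have hjq : jz < (q : ℤ) + 1 := by
          apply Int.floor_lt.mpr
          push_cast
          linarith
        set x0 : ℝ := x - (jz : ℝ) with hx0
        have hx00 : 0 ≤ x0 := by
          have := Int.floor_le x
          simp [hx0]
          linarith
        have hx01 : x0 < 1 := by
          have := Int.lt_floor_add_one x
          simp [hx0]
          linarith
        set iz : ℤ := ⌊(k : ℝ) * x0⌋ with hiz
        have hi0 : 0 ≤ iz := Int.le_floor.mpr (by exact_mod_cast mul_nonneg hkR.le hx00)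
        have hik : iz < (k : ℤ) := by
          apply Int.floor_lt.mpr
          push_cast
          calc (k : ℝ) * x0 < (k : ℝ) * 1 := by
                apply mul_lt_mul_of_pos_left hx01 hkR
          _ = (k : ℝ) := by ring
        set i : Fin k := ⟨iz.toNat, by omega⟩ with hi
        set j : Fin (q + 1) := ⟨jz.toNat, by omega⟩ with hj
        have hiR : ((i : ℕ) : ℝ) = (iz : ℝ) := by
          have h : ((i : ℕ) : ℤ) = iz := by simp [hi, Int.toNat_of_nonneg hi0]
          exact_mod_cast h
        have hjR : ((j : ℕ) : ℝ) = (jz : ℝ) := by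
          have h : ((j : ℕ) : ℤ) = jz := by simp [hj, Int.toNat_of_nonneg hj0]
          exact_mod_cast h
        have hiZ : ((i : ℕ) : ℤ) = iz := by
          simp [hi, Int.toNat_of_nonneg hi0]
        have hjZ : ((j : ℕ) : ℤ) = jz := by
          simp [hj, Int.toNat_of_nonneg hj0]
        have hfl : (iz : ℝ) ≤ (k : ℝ) * x0 := Int.floor_le _
        have hfu : (k : ℝ) * x0 < (iz : ℝ) + 1 := Int.lt_floor_add_one _
        have hxi1 : ((i : ℕ) : ℝ) / (k : ℝ) ≤ x0 := by
          rw [hiR, div_le_iff₀ hkR]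
          linarith
        have hxi2 : x0 < (((i : ℕ) : ℝ) + 1) / (k : ℝ) := by
          rw [hiR, lt_div_iff₀ hkR]
          linarith
        have hm := congrFun (hmat i x0 hxi1 hxi2) j
        simp only [Matrix.mulVec, dotProduct] at hm
        have hy0 : 0 ≤ (k : ℝ) * x0 - (iz : ℝ) := by linarith
        have hy1 : (k : ℝ) * x0 - (iz : ℝ) < 1 := by linarith
        have hkey := key_sum N q c hc f hf (iz + (k : ℤ) * jz)
          ((k : ℝ) * x0 - (iz : ℝ)) hy0 hy1
        have harg : ∀ n ∈ Finset.range (N + 1),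
            c (n : ℤ) * f ((k : ℝ) * x - (n : ℝ))
            = c (n : ℤ) * f ((k : ℝ) * x0 - (iz : ℝ) + ((iz + (k : ℤ) * jz : ℤ) : ℝ) - (n : ℝ)) := by
          intro n _
          congr 2
          have : x = x0 + (jz : ℝ) := by simp [hx0]
          rw [this]
          push_cast
          ring
        rw [Finset.sum_congr rfl harg, hkey]
        have hxeq : f x = f (x0 + ((j : ℕ) : ℝ)) := by
          congr 1
          rw [hjR]
          simp [hx0]
        rw [hxeq, hm]
        apply Finset.sum_congr rfl
        intro j' _
        rw [hB]
        have : ((i : ℕ) : ℤ) + (k : ℤ) * ((j : ℕ) : ℤ) = iz + (k : ℤ) * jz := by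
          rw [hiZ, hjZ]
        rw [this, hiR]
end

section
/- Let (A_n)_{n≥1} be a sequence of nonnegative d×d real matrices. For a nonnegative matrix M, let N(M) denote the number of distinct columns of its zero-pattern, i.e., the cardinality of the set of sets {i : M_{i,j} ≠ 0} as j ranges over the column indices. Then: (a) for every n and n' > n+1 one has N(P_{n,n'}) ≤ N(P_{n+1,n'}), so the quantity δ := lim_{n→∞} limsup_{n'→∞} N(P_{n,n'}) exists (the inner limsup being non-decreasing in n and bounded); (b) there exists n_1 ∈ ℕ such that for every n ≥ n_1 there is an infinite set H_n of integers greater than or equal to n with N(P_{n,n'}) = δ for all n' ∈ H_n, and N(P_{n,n'}) ≤ δ for all n' ≥ min H_n. -/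
open Matrix Filter
open scoped Classical

/-- `P_{m,n} = A_{m+1} ⋯ A_n` (ordered product); `P_{n,n} = I`. -/
def matProd {d : ℕ} (A : ℕ → Matrix (Fin d) (Fin d) ℝ) (m n : ℕ) :
    Matrix (Fin d) (Fin d) ℝ :=
  ((List.range (n - m)).map fun i => A (m + 1 + i)).prod

/-- `N(M)`: the number of distinct zero-patterns among the columns of `M`. -/
noncomputable def numColPatterns {d : ℕ} (M : Matrix (Fin d) (Fin d) ℝ) : ℕ :=
  (Finset.image (fun j => Finset.univ.filter fun i => M i j ≠ 0)
    (Finset.univ : Finset (Fin d))).card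

/-!
Left multiplication by a nonnegative matrix creates no cancellation, so each column pattern of
`B * M` is a function of the corresponding column pattern of `M`; hence
`N(P_{n,n'}) = N(A_{n+1} P_{n+1,n'}) ≤ N(P_{n+1,n'})`. The limsups `L_n` are therefore
non-decreasing and bounded by `d`, so eventually equal to some `δ`. A bounded `ℕ`-valued sequence
attains its limsup infinitely often and eventually stays at or below it, which yields `H_n`.
-/

section ColPattern

variable {ι κ μ : Type*} [Fintype ι] [Fintype κ]

noncomputable def colPattern (M : Matrix ι κ ℝ) (j : κ) : Finset ι :=
  Finset.univ.filter fun i => M i j ≠ 0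

lemma numColPatterns_eq_card_image_colPattern {d : ℕ} (M : Matrix (Fin d) (Fin d) ℝ) :
    numColPatterns M = (Finset.univ.image (colPattern M)).card :=
  rfl

/-- For nonnegative matrices there is no cancellation in `(B * M) i j = ∑ k, B i k * M k j`. -/
lemma colPattern_mul_of_nonneg [DecidableEq ι] {B : Matrix ι κ ℝ} {M : Matrix κ μ ℝ}
    (hB : ∀ i k, 0 ≤ B i k) (hM : ∀ k j, 0 ≤ M k j) (j : μ) :
    colPattern (B * M) j = (colPattern M j).biUnion (colPattern B) := by
  ext i
  simp only [colPattern, Finset.mem_biUnion, Finset.mem_filter, Finset.mem_univ, true_and,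
    mul_apply, ne_eq]
  rw [Finset.sum_eq_zero_iff_of_nonneg fun k _ => mul_nonneg (hB i k) (hM k j)]
  simp only [Finset.mem_univ, true_implies, mul_eq_zero, not_forall, not_or]
  exact ⟨fun ⟨k, hBk, hMk⟩ => ⟨k, hMk, hBk⟩, fun ⟨k, hMk, hBk⟩ => ⟨k, hBk, hMk⟩⟩

lemma numColPatterns_mul_le_of_nonneg {d : ℕ} {B M : Matrix (Fin d) (Fin d) ℝ}
    (hB : ∀ i j, 0 ≤ B i j) (hM : ∀ i j, 0 ≤ M i j) :
    numColPatterns (B * M) ≤ numColPatterns M := by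
  simp only [numColPatterns_eq_card_image_colPattern]
  have hfactor : colPattern (B * M) = (fun S => S.biUnion (colPattern B)) ∘ colPattern M :=
    funext (colPattern_mul_of_nonneg hB hM)
  rw [hfactor, ← Finset.image_image]
  exact Finset.card_image_le

lemma numColPatterns_le {d : ℕ} (M : Matrix (Fin d) (Fin d) ℝ) : numColPatterns M ≤ d :=
  Finset.card_image_le.trans (Finset.card_fin d).le

end ColPattern

lemma Matrix.list_prod_apply_nonneg {ι : Type*} [Fintype ι] [DecidableEq ι] (L : List (Matrix ι ι ℝ))
    (hL : ∀ M ∈ L, ∀ i j, 0 ≤ M i j) (i j : ι) : 0 ≤ L.prod i j := by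
  refine List.prod_induction (fun P : Matrix ι ι ℝ => ∀ i j, 0 ≤ P i j) ?_ ?_ hL i j
  · exact fun P Q hP hQ i j => Finset.sum_nonneg fun k _ => mul_nonneg (hP i k) (hQ k j)
  · intro i j
    by_cases hij : i = j <;> simp [one_apply, hij]

section MatProd

variable {d : ℕ} (A : ℕ → Matrix (Fin d) (Fin d) ℝ)

lemma matProd_nonneg (hA : ∀ n i j, 0 ≤ A n i j) (m n : ℕ) (i j : Fin d) :
    0 ≤ matProd A m n i j := by
  refine Matrix.list_prod_apply_nonneg _ ?_ i j
  simp only [List.mem_map, List.mem_range]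
  rintro _ ⟨k, -, rfl⟩
  exact hA _

lemma matProd_eq_mul_matProd_succ {m n : ℕ} (h : m < n) :
    matProd A m n = A (m + 1) * matProd A (m + 1) n := by
  rw [matProd, matProd, show n - m = (n - (m + 1)).succ by omega, List.prod_range_succ']
  congr 2
  exact List.map_congr_left fun i _ => congrArg A (by omega)

lemma numColPatterns_matProd_le_succ (hA : ∀ n i j, 0 ≤ A n i j) {m n : ℕ} (h : m < n) :
    numColPatterns (matProd A m n) ≤ numColPatterns (matProd A (m + 1) n) := by
  rw [matProd_eq_mul_matProd_succ A h]
  exact numColPatterns_mul_le_of_nonneg (hA (m + 1)) (matProd_nonneg A hA (m + 1) n)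

end MatProd

section NatLimsup

variable {α : Type*} {f : Filter α} {u : α → ℕ}

lemma Nat.eventually_le_limsup (hu : f.IsBoundedUnder (· ≤ ·) u) :
    ∀ᶠ x in f, u x ≤ limsup u f :=
  (eventually_lt_of_limsup_lt (Nat.lt_succ_self _) hu).mono fun _ => Nat.le_of_lt_succ

lemma Nat.frequently_eq_limsup [f.NeBot] (hu : f.IsBoundedUnder (· ≤ ·) u) :
    ∃ᶠ x in f, u x = limsup u f := by
  have hge : ∃ᶠ x in f, limsup u f ≤ u x := by
    rcases Nat.eq_zero_or_pos (limsup u f) with h0 | hpos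
    · exact Frequently.of_forall fun x => h0 ▸ Nat.zero_le _
    · exact (frequently_lt_of_lt_limsup (h := Nat.sub_one_lt hpos.ne')).mono
        fun x hx => by omega
  exact (hge.and_eventually (Nat.eventually_le_limsup hu)).mono
    fun x ⟨hle, hge⟩ => le_antisymm hge hle

end NatLimsup

lemma Nat.exists_infinite_eq_limsup_of_bddAbove {u : ℕ → ℕ} (hu : BddAbove (Set.range u))
    (n : ℕ) : ∃ H : Set ℕ, H.Infinite ∧ (∀ m ∈ H, n ≤ m) ∧
      (∀ m ∈ H, u m = limsup u atTop) ∧ ∀ m, sInf H ≤ m → u m ≤ limsup u atTop := by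
  have hbdd : atTop.IsBoundedUnder (· ≤ ·) u := hu.isBoundedUnder_of_range
  obtain ⟨N₀, hN₀⟩ := eventually_atTop.mp (Nat.eventually_le_limsup hbdd)
  set H : Set ℕ := {m | max n N₀ ≤ m ∧ u m = limsup u atTop}
  have hH : H.Infinite := Nat.frequently_atTop_iff_infinite.mp <|
    ((Nat.frequently_eq_limsup hbdd).and_eventually (eventually_ge_atTop _)).mono
      fun m ⟨heq, hle⟩ => ⟨hle, heq⟩
  refine ⟨H, hH, fun m hm => (le_max_left _ _).trans hm.1, fun m hm => hm.2, fun m hm => ?_⟩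
  exact hN₀ m ((le_max_right _ _).trans ((Nat.sInf_mem hH.nonempty).1.trans hm))

lemma Nat.exists_eventually_eq_of_monotone_of_le {L : ℕ → ℕ} (hL : Monotone L) {b : ℕ}
    (hb : ∀ n, L n ≤ b) : ∃ δ n₀, ∀ n ≥ n₀, L n = δ := by
  have hbdd : BddAbove (Set.range L) := ⟨b, Set.forall_mem_range.mpr hb⟩
  obtain ⟨n₀, hn₀⟩ := Nat.sSup_mem (Set.range_nonempty L) hbdd
  exact ⟨_, n₀, fun n hn => le_antisymm (le_csSup hbdd ⟨n, rfl⟩) (hn₀ ▸ hL hn)⟩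

/-- Lemma C.3: (a) `N(P_{n,n'}) ≤ N(P_{n+1,n'})`, so
`δ = lim_n limsup_{n'} N(P_{n,n'})` exists (the limsups are eventually constant); and
(b) from some rank `n₁` on, for every `n ≥ n₁` there is an infinite set `H_n ⊆ {n,n+1,…}`
with `N(P_{n,n'}) = δ` for `n' ∈ H_n` and `N(P_{n,n'}) ≤ δ` for all `n' ≥ min H_n`. -/
theorem num_col_patterns_monotone_and_stabilizes {d : ℕ}
    (A : ℕ → Matrix (Fin d) (Fin d) ℝ)
    (hA : ∀ n i j, 0 ≤ A n i j) :
    (∀ n n' : ℕ, n + 1 < n' →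
      numColPatterns (matProd A n n') ≤ numColPatterns (matProd A (n + 1) n')) ∧
    ∃ δ : ℕ,
      (∃ n₀ : ℕ, ∀ n ≥ n₀,
        Filter.limsup (fun n' => numColPatterns (matProd A n n')) Filter.atTop = δ) ∧
      ∃ n₁ : ℕ, ∀ n ≥ n₁, ∃ H : Set ℕ,
        H.Infinite ∧ (∀ m ∈ H, n ≤ m) ∧
        (∀ m ∈ H, numColPatterns (matProd A n m) = δ) ∧
        (∀ m : ℕ, sInf H ≤ m → numColPatterns (matProd A n m) ≤ δ) := by
  set u : ℕ → ℕ → ℕ := fun n n' => numColPatterns (matProd A n n')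
  have hbdd (n : ℕ) : BddAbove (Set.range (u n)) :=
    ⟨d, Set.forall_mem_range.mpr fun _ => numColPatterns_le _⟩
  have hmono : Monotone fun n => limsup (u n) atTop := monotone_nat_of_le_succ fun n =>
    limsup_le_limsup ((eventually_gt_atTop n).mono fun _ => numColPatterns_matProd_le_succ A hA)
      (hv := (hbdd (n + 1)).isBoundedUnder_of_range)
  obtain ⟨δ, n₀, hδ⟩ := Nat.exists_eventually_eq_of_monotone_of_le hmono fun n =>
    limsup_le_of_le (h := Eventually.of_forall fun _ => numColPatterns_le _)
  refine ⟨fun n n' h => numColPatterns_matProd_le_succ A hA (by omega), δ, ⟨n₀, hδ⟩, n₀,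
    fun n hn => ?_⟩
  simpa only [hδ n hn] using Nat.exists_infinite_eq_limsup_of_bddAbove (hbdd n) n
end
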